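/- Let T: 𝒜 → 𝒜 be a linear map with ∥Tf∥₂ ≤ ∥f∥₂ and ∥Tf∥_∞ ≤ ∥f∥_∞ for all f ∈ 𝒜. Then for every f ∈ 𝒜 and every integer n ≥ 0, S_n(Tf, Tf) ≤ S_n(f, f); consequently, for every f ∈ 𝒜 with ∥f∥_∞ < 1/2, K(Tf, Tf) ≤ K(f, f), i.e. −∫_{ℝ^d} log(1 − 4|Tf(s)|²) ds ≤ −∫_{ℝ^d} log(1 − 4|f(s)|²) ds. (This is Lemma 15 of the paper: ∥Γ₂(T)Ψ(f)∥ ≤ ∥Ψ(f)∥ on every single quadratic exponential vector.) -/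

import Mathlib

open MeasureTheory Complex Finset
open scoped Nat ENNReal

noncomputable section

/-- The domain `ℝ^d`. -/
abbrev Dom (d : ℕ) := Fin d → ℝ

/-- Membership in `𝒜 = L²(ℝ^d) ∩ L^∞(ℝ^d)`. -/
def MemA (d : ℕ) (f : Dom d → ℂ) : Prop :=
  MemLp f 2 (volume : Measure (Dom d)) ∧ MemLp f ⊤ (volume : Measure (Dom d))

/-- `⟨f^k, g^k⟩`, the power inner products. -/
def pip (d : ℕ) (f g : Dom d → ℂ) (k : ℕ) : ℂ :=
  ∫ x : Dom d, (starRingEnd ℂ) (f x) ^ k * g x ^ k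

/-- `S_n(f,g)`, the inner product of quadratic `n`-particle vectors. -/
def Sker (c : ℝ) (d : ℕ) (f g : Dom d → ℂ) (n : ℕ) : ℂ :=
  ∑ p : Nat.Partition n,
    (n ! : ℂ) ^ 2 * 2 ^ (2 * n - 1) *
      ∏ j ∈ p.parts.toFinset,
        (c : ℂ) ^ p.parts.count j /
            (((p.parts.count j)! : ℂ) * (j : ℂ) ^ p.parts.count j) *
          pip d f g j ^ p.parts.count j

/-- `K(f,g) = ⟨Ψ(f),Ψ(g)⟩`, the inner product of quadratic exponential vectors. -/
def Kker (c : ℝ) (d : ℕ) (f g : Dom d → ℂ) : ℂ :=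
  Complex.exp (-(c / 2 : ℂ) *
    ∫ x : Dom d, Complex.log (1 - 4 * (starRingEnd ℂ) (f x) * g x))

/-!
A contraction `T` of both `L²` and `L^∞` does not increase `∫ (|f| - t)₊²` for any level `t > 0`:
writing `f = (f - f_t) + f_t` with `f_t` the radial truncation of `f` at height `t`, we have
`|Tf| ≤ |T(f - f_t)| + t` a.e. and `‖T(f - f_t)‖₂ ≤ ‖f - f_t‖₂ = ‖(|f| - t)₊‖₂`.
Since `u^(m+3) = (m+1)(m+2)(m+3)/2 · ∫₀^∞ t^m (u - t)₊² dt`, this yields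
`∫ |Tf|^p ≤ ∫ |f|^p` for every `p ≥ 2`. Both `S_n(f,f)`, a polynomial with nonnegative
coefficients in the moments `∫ |f|^(2k)`, and `-∫ log(1 - 4|f|²) = ∑ 4^k/k ∫ |f|^(2k)` are
monotone in these moments.
-/

open Set

namespace QuadraticExponential

section RadialTruncation

variable {E : Type*} [NormedAddCommGroup E] [NormedSpace ℝ E] {t : ℝ}

def radialTrunc (t : ℝ) (z : E) : E := (t / max t ‖z‖) • z

lemma continuous_radialTrunc (ht : 0 < t) : Continuous (radialTrunc (E := E) t) :=
  (continuous_const.div (continuous_const.max continuous_norm) fun _ =>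
    (ht.trans_le (le_max_left _ _)).ne').smul continuous_id

lemma norm_radialTrunc (ht : 0 < t) (z : E) : ‖radialTrunc t z‖ = min t ‖z‖ := by
  rw [radialTrunc, norm_smul, Real.norm_of_nonneg (by positivity)]
  rcases le_total ‖z‖ t with h | h
  · rw [max_eq_left h, min_eq_right h, div_self ht.ne', one_mul]
  · rw [max_eq_right h, min_eq_left h, div_mul_cancel₀ _ (ht.trans_le h).ne']

lemma norm_sub_radialTrunc (ht : 0 < t) (z : E) :
    ‖z - radialTrunc t z‖ = max (‖z‖ - t) 0 := by
  have hcoef : 0 ≤ 1 - t / max t ‖z‖ :=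
    sub_nonneg.2 ((div_le_one (ht.trans_le (le_max_left _ _))).2 (le_max_left _ _))
  have hsub : z - radialTrunc t z = (1 - t / max t ‖z‖) • z := by
    rw [radialTrunc, sub_smul, one_smul]
  rw [hsub, norm_smul, Real.norm_of_nonneg hcoef]
  rcases le_total ‖z‖ t with h | h
  · rw [max_eq_left h, div_self ht.ne', sub_self, zero_mul, max_eq_right (by linarith)]
  · rw [max_eq_right h, max_eq_left (by linarith), sub_mul, one_mul,
      div_mul_cancel₀ _ (ht.trans_le h).ne']

end RadialTruncation

section Lp

variable {α E : Type*} [MeasurableSpace α] {μ : Measure α} [NormedAddCommGroup E]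

lemma lintegral_ofReal_norm_sq (h : α → E) :
    ∫⁻ x, ENNReal.ofReal (‖h x‖ ^ 2) ∂μ = eLpNorm h 2 μ ^ 2 := by
  rw [eLpNorm_eq_lintegral_rpow_enorm_toReal two_ne_zero ENNReal.ofNat_ne_top,
    ← ENNReal.rpow_natCast _ 2, ← ENNReal.rpow_mul]
  norm_num [ofReal_norm]

lemma ae_norm_le_of_eLpNorm_top_le {g : α → E} {C : ℝ} (hC : 0 ≤ C)
    (hg : eLpNorm g ⊤ μ ≤ ENNReal.ofReal C) : ∀ᵐ x ∂μ, ‖g x‖ ≤ C := by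
  rw [eLpNorm_exponent_top] at hg
  filter_upwards [enorm_ae_le_eLpNormEssSup g μ] with x hx
  rw [← ofReal_norm] at hx
  exact (ENNReal.ofReal_le_ofReal_iff hC).1 (hx.trans hg)

lemma integral_le_integral_of_lintegral_ofReal_le {g h : α → ℝ} (hg0 : 0 ≤ᵐ[μ] g)
    (hg : AEStronglyMeasurable g μ) (hh0 : 0 ≤ᵐ[μ] h) (hh : Integrable h μ)
    (hle : ∫⁻ x, ENNReal.ofReal (g x) ∂μ ≤ ∫⁻ x, ENNReal.ofReal (h x) ∂μ) :
    ∫ x, g x ∂μ ≤ ∫ x, h x ∂μ := by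
  rw [integral_eq_lintegral_of_nonneg_ae hg0 hg, integral_eq_lintegral_of_nonneg_ae hh0 hh.1]
  exact ENNReal.toReal_mono hh.lintegral_lt_top.ne hle

lemma integrable_norm_pow_of_memLp_top {h : α → E} (h2 : MemLp h 2 μ) (htop : MemLp h ⊤ μ)
    {p : ℕ} (hp : 2 ≤ p) : Integrable (fun x => ‖h x‖ ^ p) μ := by
  have hbdd := (((memLp_two_iff_integrable_sq_norm h2.1).1 h2).bdd_mul
    (f := fun x => ‖h x‖ ^ (p - 2)) (h2.1.norm.pow (p - 2)) (c := lpNorm h ⊤ μ ^ (p - 2)) <|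
    (ae_le_lpNorm_exponent_top htop).mono fun x hx => by
      rw [norm_pow, norm_norm]
      exact pow_le_pow_left₀ (norm_nonneg _) hx _)
  refine hbdd.congr (ae_of_all _ fun x => ?_)
  simp only [← pow_add, Nat.sub_add_cancel hp]

end Lp

section LayerCake

variable {α : Type*} [MeasurableSpace α] {μ : Measure α} [SFinite μ]

lemma integral_pow_mul_sub_sq (a : ℝ) (m : ℕ) :
    ∫ t in (0 : ℝ)..a, t ^ m * (a - t) ^ 2 =
      2 * a ^ (m + 3) / ((m + 1) * (m + 2) * (m + 3)) := by
  have hexpand : (fun t : ℝ => t ^ m * (a - t) ^ 2) =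
      fun t => a ^ 2 * t ^ m - 2 * a * t ^ (m + 1) + t ^ (m + 2) := by
    funext t; ring
  simp only [hexpand]
  have hint : ∀ f : ℝ → ℝ, Continuous f → IntervalIntegrable f volume 0 a :=
    fun f hf => hf.intervalIntegrable _ _
  rw [intervalIntegral.integral_add (hint _ (by fun_prop)) (hint _ (by fun_prop)),
    intervalIntegral.integral_sub (hint _ (by fun_prop)) (hint _ (by fun_prop)),
    intervalIntegral.integral_const_mul, intervalIntegral.integral_const_mul,
    integral_pow, integral_pow, integral_pow]
  field_simp
  push_cast
  ring

lemma ofReal_pow_eq_mul_setLIntegral_excess_sq {a : ℝ} (ha : 0 ≤ a) (m : ℕ) :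
    ENNReal.ofReal (a ^ (m + 3)) = ENNReal.ofReal ((m + 1) * (m + 2) * (m + 3) / 2) *
      ∫⁻ t in Ioi 0, ENNReal.ofReal (t ^ m) * ENNReal.ofReal (max (a - t) 0 ^ 2) := by
  have hvanish : ∀ t ∈ Ioi a, ENNReal.ofReal (t ^ m) * ENNReal.ofReal (max (a - t) 0 ^ 2) = 0 :=
    fun t ht => by rw [max_eq_right (by linarith [ht.out])]; simp
  have hIoc : ∀ t ∈ Ioc 0 a, ENNReal.ofReal (t ^ m) * ENNReal.ofReal (max (a - t) 0 ^ 2) =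
      ENNReal.ofReal (t ^ m * (a - t) ^ 2) := fun t ht => by
    rw [max_eq_left (by linarith [ht.2]), ENNReal.ofReal_mul (pow_nonneg ht.1.le m)]
  rw [← Ioc_union_Ioi_eq_Ioi ha, lintegral_union measurableSet_Ioi (Ioc_disjoint_Ioi le_rfl),
    setLIntegral_congr_fun measurableSet_Ioi hvanish, lintegral_zero, add_zero,
    setLIntegral_congr_fun measurableSet_Ioc hIoc,
    ← ofReal_integral_eq_lintegral_ofReal (Continuous.integrableOn_Ioc (by fun_prop)) ?_,
    ← intervalIntegral.integral_of_le ha, integral_pow_mul_sub_sq,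
    ← ENNReal.ofReal_mul (by positivity)]
  · congr 1
    field_simp
  · exact (ae_restrict_iff' measurableSet_Ioc).2 (ae_of_all _ fun t ht => by
      have := ht.1; positivity)

lemma lintegral_pow_eq_mul_setLIntegral_excess_sq {u : α → ℝ} (hu : AEMeasurable u μ)
    (hu0 : ∀ x, 0 ≤ u x) (m : ℕ) :
    ∫⁻ x, ENNReal.ofReal (u x ^ (m + 3)) ∂μ = ENNReal.ofReal ((m + 1) * (m + 2) * (m + 3) / 2) *
      ∫⁻ t in Ioi 0, ENNReal.ofReal (t ^ m) * ∫⁻ x, ENNReal.ofReal (max (u x - t) 0 ^ 2) ∂μ := by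
  have hmeas : AEMeasurable (Function.uncurry fun (x : α) (t : ℝ) =>
      ENNReal.ofReal (t ^ m) * ENNReal.ofReal (max (u x - t) 0 ^ 2))
      (μ.prod (volume.restrict (Ioi 0))) := by
    have hu' : AEMeasurable (fun p : α × ℝ => u p.1) (μ.prod (volume.restrict (Ioi 0))) :=
      hu.comp_fst
    exact (measurable_snd.pow_const m).ennreal_ofReal.aemeasurable.mul
      ((hu'.sub measurable_snd.aemeasurable).max aemeasurable_const |>.pow_const 2).ennreal_ofReal
  simp_rw [ofReal_pow_eq_mul_setLIntegral_excess_sq (hu0 _) m]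
  rw [lintegral_const_mul' _ _ ENNReal.ofReal_ne_top, lintegral_lintegral_swap hmeas]
  simp_rw [lintegral_const_mul' _ _ ENNReal.ofReal_ne_top]

theorem lintegral_pow_le_of_lintegral_excess_sq_le {u v : α → ℝ}
    (hu : AEMeasurable u μ) (hv : AEMeasurable v μ) (hu0 : ∀ x, 0 ≤ u x) (hv0 : ∀ x, 0 ≤ v x)
    (hsq : ∫⁻ x, ENNReal.ofReal (u x ^ 2) ∂μ ≤ ∫⁻ x, ENNReal.ofReal (v x ^ 2) ∂μ)
    (hexcess : ∀ t, 0 < t → ∫⁻ x, ENNReal.ofReal (max (u x - t) 0 ^ 2) ∂μ ≤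
      ∫⁻ x, ENNReal.ofReal (max (v x - t) 0 ^ 2) ∂μ)
    {p : ℕ} (hp : 2 ≤ p) :
    ∫⁻ x, ENNReal.ofReal (u x ^ p) ∂μ ≤ ∫⁻ x, ENNReal.ofReal (v x ^ p) ∂μ := by
  obtain rfl | hp := hp.eq_or_lt
  · exact hsq
  obtain ⟨m, rfl⟩ : ∃ m, p = m + 3 := ⟨p - 3, by omega⟩
  rw [lintegral_pow_eq_mul_setLIntegral_excess_sq hu hu0,
    lintegral_pow_eq_mul_setLIntegral_excess_sq hv hv0]
  gcongr 1
  exact setLIntegral_mono' measurableSet_Ioi fun t ht => mul_le_mul_right (hexcess t ht) _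

end LayerCake

section Contraction

variable {α E : Type*} [MeasurableSpace α] {μ : Measure α} [NormedAddCommGroup E]
  [NormedSpace ℝ E]

theorem lintegral_excess_sq_le_of_contraction {T : (α → E) → (α → E)}
    (hTadd : ∀ f g, MemLp f 2 μ ∧ MemLp f ⊤ μ → MemLp g 2 μ ∧ MemLp g ⊤ μ →
      T (f + g) =ᵐ[μ] T f + T g)
    (hT2 : ∀ f, MemLp f 2 μ ∧ MemLp f ⊤ μ → eLpNorm (T f) 2 μ ≤ eLpNorm f 2 μ)
    (hTinf : ∀ f, MemLp f 2 μ ∧ MemLp f ⊤ μ → eLpNorm (T f) ⊤ μ ≤ eLpNorm f ⊤ μ)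
    {f : α → E} (hf : MemLp f 2 μ ∧ MemLp f ⊤ μ) {t : ℝ} (ht : 0 < t) :
    ∫⁻ x, ENNReal.ofReal (max (‖T f x‖ - t) 0 ^ 2) ∂μ ≤
      ∫⁻ x, ENNReal.ofReal (max (‖f x‖ - t) 0 ^ 2) ∂μ := by
  set ft : α → E := fun x => radialTrunc t (f x)
  have hft : MemLp ft 2 μ ∧ MemLp ft ⊤ μ := by
    have hm : AEStronglyMeasurable ft μ :=
      (continuous_radialTrunc ht).comp_aestronglyMeasurable hf.1.1
    have hle : ∀ᵐ x ∂μ, ‖ft x‖ ≤ ‖f x‖ :=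
      ae_of_all _ fun x => (norm_radialTrunc ht _).trans_le (min_le_right _ _)
    exact ⟨hf.1.of_le hm hle, hf.2.of_le hm hle⟩
  have hrest : MemLp (f - ft) 2 μ ∧ MemLp (f - ft) ⊤ μ := ⟨hf.1.sub hft.1, hf.2.sub hft.2⟩
  have hTft : ∀ᵐ x ∂μ, ‖T ft x‖ ≤ t := by
    refine ae_norm_le_of_eLpNorm_top_le ht.le ((hTinf ft hft).trans ?_)
    rw [eLpNorm_exponent_top]
    exact eLpNormEssSup_le_of_ae_bound
      (ae_of_all _ fun x => (norm_radialTrunc ht _).trans_le (min_le_left _ _))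
  have hpointwise : ∀ᵐ x ∂μ, max (‖T f x‖ - t) 0 ≤ ‖T (f - ft) x‖ := by
    filter_upwards [hTadd (f - ft) ft hrest hft, hTft] with x hadd hx
    rw [sub_add_cancel, Pi.add_apply] at hadd
    rw [hadd]
    exact max_le (by linarith [norm_add_le (T (f - ft) x) (T ft x)]) (norm_nonneg _)
  calc ∫⁻ x, ENNReal.ofReal (max (‖T f x‖ - t) 0 ^ 2) ∂μ
      ≤ ∫⁻ x, ENNReal.ofReal (‖T (f - ft) x‖ ^ 2) ∂μ :=
        lintegral_mono_ae <| hpointwise.mono fun x hx =>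
          ENNReal.ofReal_le_ofReal (pow_le_pow_left₀ (le_max_right _ _) hx 2)
    _ = eLpNorm (T (f - ft)) 2 μ ^ 2 := lintegral_ofReal_norm_sq _
    _ ≤ eLpNorm (f - ft) 2 μ ^ 2 := by gcongr; exact hT2 _ hrest
    _ = ∫⁻ x, ENNReal.ofReal (‖(f - ft) x‖ ^ 2) ∂μ := (lintegral_ofReal_norm_sq _).symm
    _ = ∫⁻ x, ENNReal.ofReal (max (‖f x‖ - t) 0 ^ 2) ∂μ := by
      simp only [Pi.sub_apply, ft, norm_sub_radialTrunc ht]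

theorem lintegral_norm_pow_le_of_contraction [SFinite μ] {T : (α → E) → (α → E)}
    (hTadd : ∀ f g, MemLp f 2 μ ∧ MemLp f ⊤ μ → MemLp g 2 μ ∧ MemLp g ⊤ μ →
      T (f + g) =ᵐ[μ] T f + T g)
    (hT2 : ∀ f, MemLp f 2 μ ∧ MemLp f ⊤ μ → eLpNorm (T f) 2 μ ≤ eLpNorm f 2 μ)
    (hTinf : ∀ f, MemLp f 2 μ ∧ MemLp f ⊤ μ → eLpNorm (T f) ⊤ μ ≤ eLpNorm f ⊤ μ)
    {f : α → E} (hf : MemLp f 2 μ ∧ MemLp f ⊤ μ) (hTf : AEStronglyMeasurable (T f) μ)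
    {p : ℕ} (hp : 2 ≤ p) :
    ∫⁻ x, ENNReal.ofReal (‖T f x‖ ^ p) ∂μ ≤ ∫⁻ x, ENNReal.ofReal (‖f x‖ ^ p) ∂μ :=
  lintegral_pow_le_of_lintegral_excess_sq_le hTf.norm.aemeasurable hf.1.1.norm.aemeasurable
    (fun _ => norm_nonneg _) (fun _ => norm_nonneg _)
    (by rw [lintegral_ofReal_norm_sq, lintegral_ofReal_norm_sq]; gcongr; exact hT2 f hf)
    (fun _ ht => lintegral_excess_sq_le_of_contraction hTadd hT2 hTinf hf ht) hp

end Contraction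

section Moments

def realSker (c : ℝ) (n : ℕ) (m : ℕ → ℝ) : ℝ :=
  ∑ p : Nat.Partition n,
    (n ! : ℝ) ^ 2 * 2 ^ (2 * n - 1) *
      ∏ j ∈ p.parts.toFinset,
        c ^ p.parts.count j / (((p.parts.count j)! : ℝ) * (j : ℝ) ^ p.parts.count j) *
          m j ^ p.parts.count j

lemma realSker_mono {c : ℝ} (hc : 0 ≤ c) (n : ℕ) {m m' : ℕ → ℝ} (hm : ∀ j, 1 ≤ j → 0 ≤ m j)
    (hmm' : ∀ j, 1 ≤ j → m j ≤ m' j) : realSker c n m ≤ realSker c n m' := by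
  refine Finset.sum_le_sum fun p _ => mul_le_mul_of_nonneg_left ?_ (by positivity)
  refine Finset.prod_le_prod (fun j hj => ?_) fun j hj => ?_ <;>
    have hj1 : 1 ≤ j := p.parts_pos (Multiset.mem_toFinset.1 hj)
  · exact mul_nonneg (by positivity) (pow_nonneg (hm j hj1) _)
  · exact mul_le_mul_of_nonneg_left (pow_le_pow_left₀ (hm j hj1) (hmm' j hj1) _) (by positivity)

variable {d : ℕ}

lemma pip_self (h : Dom d → ℂ) (k : ℕ) : pip d h h k = ((∫ x, ‖h x‖ ^ (2 * k) : ℝ) : ℂ) := by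
  have hconj : ∀ z : ℂ, (starRingEnd ℂ) z ^ k * z ^ k = ((‖z‖ ^ (2 * k) : ℝ) : ℂ) := fun z => by
    rw [← mul_pow, mul_comm, Complex.mul_conj, Complex.normSq_eq_norm_sq, pow_mul]
    push_cast; ring
  simp_rw [pip, hconj]
  exact integral_ofReal

lemma Sker_self (c : ℝ) (h : Dom d → ℂ) (n : ℕ) :
    Sker c d h h n = realSker c n (fun k => ∫ x, ‖h x‖ ^ (2 * k)) := by
  simp only [Sker, realSker, pip_self]
  norm_cast

end Moments

section Logarithm

variable {α E : Type*} [MeasurableSpace α] {μ : Measure α} [NormedAddCommGroup E]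

lemma ofReal_neg_log_one_sub_eq_tsum {x : ℝ} (hx0 : 0 ≤ x) (hx1 : x < 1) :
    ENNReal.ofReal (-Real.log (1 - x)) = ∑' n : ℕ, ENNReal.ofReal (x ^ (n + 1) / (n + 1)) := by
  have hs := Real.hasSum_pow_div_log_of_abs_lt_one (by rwa [abs_of_nonneg hx0])
  rw [← hs.tsum_eq]
  exact ENNReal.ofReal_tsum_of_nonneg (fun n => by positivity) hs.summable

lemma abs_log_one_sub_le {x y : ℝ} (hx0 : 0 ≤ x) (hxy : x ≤ y) (hy1 : y < 1) :
    |Real.log (1 - x)| ≤ x / (1 - y) := by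
  have hx1 : 0 < 1 - x := by linarith
  have hlower := Real.one_sub_inv_le_log_of_pos hx1
  have hupper := Real.log_nonpos hx1.le (by linarith)
  have hxx : x / (1 - x) ≤ x / (1 - y) := div_le_div_of_nonneg_left hx0 (by linarith) (by linarith)
  rw [abs_le]
  constructor
  · have : 1 - (1 - x)⁻¹ = -(x / (1 - x)) := by field_simp; ring
    linarith
  · linarith [div_nonneg hx0 hx1.le]

lemma lintegral_neg_log_one_sub_four_mul_norm_sq {h : α → E} (hh : AEStronglyMeasurable h μ)
    (hb : ∀ᵐ x ∂μ, ‖h x‖ < 1 / 2) :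
    ∫⁻ x, ENNReal.ofReal (-Real.log (1 - 4 * ‖h x‖ ^ 2)) ∂μ =
      ∑' n : ℕ, ENNReal.ofReal (4 ^ (n + 1) / (n + 1)) *
        ∫⁻ x, ENNReal.ofReal (‖h x‖ ^ (2 * (n + 1))) ∂μ := by
  have hterm : ∀ x (n : ℕ), ENNReal.ofReal ((4 * ‖h x‖ ^ 2) ^ (n + 1) / (n + 1)) =
      ENNReal.ofReal (4 ^ (n + 1) / (n + 1)) * ENNReal.ofReal (‖h x‖ ^ (2 * (n + 1))) := by
    intro x n
    rw [← ENNReal.ofReal_mul (by positivity), mul_pow, pow_mul]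
    ring_nf
  calc _ = ∫⁻ x, ∑' n : ℕ, ENNReal.ofReal (4 ^ (n + 1) / (n + 1)) *
          ENNReal.ofReal (‖h x‖ ^ (2 * (n + 1))) ∂μ := by
        refine lintegral_congr_ae (hb.mono fun x hx => ?_)
        dsimp only
        rw [ofReal_neg_log_one_sub_eq_tsum (by positivity) (by nlinarith [norm_nonneg (h x)])]
        simp_rw [hterm]
    _ = _ := by
        rw [lintegral_tsum fun n => ((hh.norm.aemeasurable.pow_const _).ennreal_ofReal).const_mul _]
        simp_rw [lintegral_const_mul' _ _ ENNReal.ofReal_ne_top]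

lemma integrable_log_one_sub_four_mul_norm_sq {h : α → E} (hh : MemLp h 2 μ) {M : ℝ}
    (hM : M < 1 / 2) (hb : ∀ᵐ x ∂μ, ‖h x‖ ≤ M) :
    Integrable (fun x => Real.log (1 - 4 * ‖h x‖ ^ 2)) μ := by
  refine (((memLp_two_iff_integrable_sq_norm hh.1).1 hh).const_mul
    (4 / (1 - 4 * M ^ 2))).mono' ?_ ?_
  · exact (Real.measurable_log.comp_aemeasurable (aemeasurable_const.sub
      ((hh.1.norm.aemeasurable.pow_const 2).const_mul 4))).aestronglyMeasurable
  · filter_upwards [hb] with x hx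
    have hnorm := norm_nonneg (h x)
    calc ‖Real.log (1 - 4 * ‖h x‖ ^ 2)‖ ≤ 4 * ‖h x‖ ^ 2 / (1 - 4 * M ^ 2) :=
          abs_log_one_sub_le (by positivity) (by gcongr) (by nlinarith)
      _ = 4 / (1 - 4 * M ^ 2) * ‖h x‖ ^ 2 := by ring

theorem neg_integral_log_le_of_lintegral_pow_le {g h : α → E} (hg : AEStronglyMeasurable g μ)
    (hh : MemLp h 2 μ) {M : ℝ} (hM : M < 1 / 2) (hgb : ∀ᵐ x ∂μ, ‖g x‖ ≤ M)
    (hhb : ∀ᵐ x ∂μ, ‖h x‖ ≤ M)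
    (hmoment : ∀ k, 1 ≤ k → ∫⁻ x, ENNReal.ofReal (‖g x‖ ^ (2 * k)) ∂μ ≤
      ∫⁻ x, ENNReal.ofReal (‖h x‖ ^ (2 * k)) ∂μ) :
    -∫ x, Real.log (1 - 4 * ‖g x‖ ^ 2) ∂μ ≤ -∫ x, Real.log (1 - 4 * ‖h x‖ ^ 2) ∂μ := by
  have hnonneg : ∀ w : α → E, (∀ᵐ x ∂μ, ‖w x‖ ≤ M) →
      0 ≤ᵐ[μ] fun x => -Real.log (1 - 4 * ‖w x‖ ^ 2) := fun w hw =>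
    hw.mono fun x hx => neg_nonneg.2 <|
      Real.log_nonpos (by nlinarith [norm_nonneg (w x)]) (by nlinarith [norm_nonneg (w x)])
  have hlt : ∀ w : α → E, (∀ᵐ x ∂μ, ‖w x‖ ≤ M) → ∀ᵐ x ∂μ, ‖w x‖ < 1 / 2 := fun w hw =>
    hw.mono fun x hx => hx.trans_lt hM
  rw [← integral_neg, ← integral_neg]
  refine integral_le_integral_of_lintegral_ofReal_le (hnonneg g hgb) ?_ (hnonneg h hhb)
    (integrable_log_one_sub_four_mul_norm_sq hh hM hhb).neg ?_
  · exact (Real.measurable_log.comp_aemeasurable (aemeasurable_const.sub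
      ((hg.norm.aemeasurable.pow_const 2).const_mul 4))).neg.aestronglyMeasurable
  rw [lintegral_neg_log_one_sub_four_mul_norm_sq hg (hlt g hgb),
    lintegral_neg_log_one_sub_four_mul_norm_sq hh.1 (hlt h hhb)]
  exact ENNReal.tsum_le_tsum fun n => mul_le_mul_right (hmoment (n + 1) n.succ_pos) _

end Logarithm

lemma Kker_self (c : ℝ) {d : ℕ} {h : Dom d → ℂ} (hb : ∀ᵐ x, ‖h x‖ ≤ 1 / 2) :
    Kker c d h h = (Real.exp (-(c / 2) * ∫ x, Real.log (1 - 4 * ‖h x‖ ^ 2)) : ℂ) := by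
  have hlog : ∀ᵐ x, Complex.log (1 - 4 * (starRingEnd ℂ) (h x) * h x) =
      (Real.log (1 - 4 * ‖h x‖ ^ 2) : ℂ) := by
    filter_upwards [hb] with x hx
    have hreal : 1 - 4 * (starRingEnd ℂ) (h x) * h x = ((1 - 4 * ‖h x‖ ^ 2 : ℝ) : ℂ) := by
      rw [mul_assoc, mul_comm ((starRingEnd ℂ) (h x)), Complex.mul_conj,
        Complex.normSq_eq_norm_sq]
      push_cast
      ring
    rw [hreal, Complex.ofReal_log (by nlinarith [norm_nonneg (h x)])]
  rw [Kker, integral_congr_ae hlog, integral_complex_ofReal]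
  push_cast
  ring_nf

end QuadraticExponential

open QuadraticExponential

theorem statement18 (d : ℕ) (c : ℝ) (hc : 0 < c)
    (T : (Dom d → ℂ) → (Dom d → ℂ))
    (hTmem : ∀ f, MemA d f → MemA d (T f))
    (hTadd : ∀ f g, MemA d f → MemA d g →
      T (f + g) =ᵐ[(volume : Measure (Dom d))] T f + T g)
    (hT2 : ∀ f, MemA d f →
      eLpNorm (T f) 2 (volume : Measure (Dom d)) ≤ eLpNorm f 2 (volume : Measure (Dom d)))
    (hTinf : ∀ f, MemA d f →
      eLpNorm (T f) ⊤ (volume : Measure (Dom d)) ≤ eLpNorm f ⊤ (volume : Measure (Dom d)))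
    (f : Dom d → ℂ) (hf : MemA d f) :
    (∀ n : ℕ, (Sker c d (T f) (T f) n).im = 0 ∧ (Sker c d f f n).im = 0 ∧
      (Sker c d (T f) (T f) n).re ≤ (Sker c d f f n).re) ∧
    (eLpNorm f ⊤ (volume : Measure (Dom d)) < 1 / 2 →
      ((Kker c d (T f) (T f)).im = 0 ∧ (Kker c d f f).im = 0 ∧
        (Kker c d (T f) (T f)).re ≤ (Kker c d f f).re) ∧
      -∫ x : Dom d, Real.log (1 - 4 * ‖T f x‖ ^ 2) ≤
        -∫ x : Dom d, Real.log (1 - 4 * ‖f x‖ ^ 2)) := by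
  have hTf := hTmem f hf
  have hmoment : ∀ k, 1 ≤ k → ∫⁻ x, ENNReal.ofReal (‖T f x‖ ^ (2 * k)) ≤
      ∫⁻ x, ENNReal.ofReal (‖f x‖ ^ (2 * k)) := fun k hk =>
    lintegral_norm_pow_le_of_contraction hTadd hT2 hTinf hf hTf.1.1 (by omega)
  refine ⟨fun n => ?_, fun hsmall => ?_⟩
  · rw [Sker_self, Sker_self, ofReal_im, ofReal_im, ofReal_re, ofReal_re]
    refine ⟨rfl, rfl, realSker_mono hc.le n (fun j _ => integral_nonneg fun x => by positivity)
      fun j hj => ?_⟩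
    exact integral_le_integral_of_lintegral_ofReal_le (ae_of_all _ fun x => by positivity)
      (hTf.1.1.norm.pow _) (ae_of_all _ fun x => by positivity)
      (integrable_norm_pow_of_memLp_top hf.1 hf.2 (by omega)) (hmoment j hj)
  · have hM : (eLpNorm f ⊤ volume).toReal < 1 / 2 := by
      simpa using ENNReal.toReal_strict_mono (by norm_num) hsmall
    set M := (eLpNorm f ⊤ volume).toReal
    have hfM : eLpNorm f ⊤ volume = ENNReal.ofReal M := (ENNReal.ofReal_toReal hsmall.ne_top).symm
    have hfb := ae_norm_le_of_eLpNorm_top_le ENNReal.toReal_nonneg hfM.le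
    have hTfb := ae_norm_le_of_eLpNorm_top_le ENNReal.toReal_nonneg ((hTinf f hf).trans hfM.le)
    have hlog := neg_integral_log_le_of_lintegral_pow_le hTf.1.1 hf.1 hM hTfb hfb hmoment
    rw [Kker_self c (hTfb.mono fun x hx => hx.trans hM.le),
      Kker_self c (hfb.mono fun x hx => hx.trans hM.le), ofReal_im, ofReal_im, ofReal_re, ofReal_re]
    refine ⟨⟨rfl, rfl, Real.exp_le_exp.2 ?_⟩, hlog⟩
    nlinarith
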